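/- Let v be an irreducible Llull matrix with CLC structure on (S, ξ) and let φ be the Zermelo strengths, i.e., the unique φ in the open simplex maximizing F(φ) = ∏_{{x,y}} φ_x^{v_{xy}} φ_y^{v_{yx}}/(φ_x+φ_y)^{t_{xy}}. Then φ_x > φ_y implies ρ_x > ρ_y, where ρ_x = (1/(N−1)) Σ_{z≠x} v_{xz} are the mean preference scores. -/

import Mathlib

/-- The minimum score along a path `x, z₁, …, zₖ, y` (the list gives the
intermediate points; the empty list is the direct link from `x` to `y`). -/
def chainMin {S : Type*} (v : S → S → ℝ) : S → List S → S → ℝ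
  | x, [], y => v x y
  | x, z :: l, y => min (v x z) (chainMin v z l y)

/-- Indirect (max-min) score: supremum over all paths from `x` to `y`
of the minimum direct score along the path. -/
noncomputable def iScore {S : Type*} (v : S → S → ℝ) (x y : S) : ℝ :=
  sSup {r : ℝ | ∃ l : List S, r = chainMin v x l y}

/-- A Llull matrix: preference scores in `[0,1]` with `v x y + v y x ≤ 1`. -/
def IsLlull {S : Type*} (v : S → S → ℝ) : Prop :=
  ∀ x y : S, x ≠ y → 0 ≤ v x y ∧ v x y ≤ 1 ∧ v x y + v y x ≤ 1


/-- CLC structure with respect to the linear order on `S` (the admissible order ξ):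
(1) `v x y ≥ v y x` for `x < y`; (2) `v x z = max (v x y) (v y z)` and
(3) `v z x = min (v z y) (v y x)` for `x < y < z`; (4) `0 ≤ t x z − t x' z ≤ m x x'`
for `z ∉ {x, x'}` where `x'` is the immediate successor (`x ⋖ x'`),
`t x y = v x y + v y x` and `m x y = v x y − v y x`. -/
def CLC {S : Type*} [LinearOrder S] (v : S → S → ℝ) : Prop :=
  (∀ x y : S, x < y → v y x ≤ v x y) ∧
  (∀ x y z : S, x < y → y < z → v x z = max (v x y) (v y z)) ∧
  (∀ x y z : S, x < y → y < z → v z x = min (v z y) (v y x)) ∧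
  (∀ x x' z : S, x ⋖ x' → z ≠ x → z ≠ x' →
    0 ≤ (v x z + v z x) - (v x' z + v z x') ∧
    (v x z + v z x) - (v x' z + v z x') ≤ v x x' - v x' x)

/-- Zermelo's likelihood function, as a product over ordered pairs. -/
noncomputable def Zf {S : Type*} [Fintype S] [DecidableEq S]
    (v : S → S → ℝ) (φ : S → ℝ) : ℝ :=
  ∏ x, ∏ y ∈ Finset.univ.erase x, (φ x) ^ (v x y) / (φ x + φ y) ^ (v x y)

/-- The open simplex of normalized positive strength vectors. -/
def simplexPos (S : Type*) [Fintype S] : Set (S → ℝ) :=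
  {φ | (∀ x, 0 < φ x) ∧ ∑ x, φ x = 1}

/-- Mean preference score `ρ x = (1/(N−1)) Σ_{z≠x} v x z`. -/
noncomputable def mps {S : Type*} [Fintype S] [DecidableEq S]
    (v : S → S → ℝ) (x : S) : ℝ :=
  ((Fintype.card S : ℝ) - 1)⁻¹ * ∑ z ∈ Finset.univ.erase x, v x z

/-!
Zermelo's equations say that at the maximizer every row sum `R a = ∑_{z ≠ a} v a z` equals
`∑_{z ≠ a} t a z · p a z` with `p a z = φ a / (φ a + φ z)`. It suffices to compare consecutive
elements `a ⋖ b` of the order, the general case following along a chain of covers. Match the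
opponents of `a` with those of `b` through the transposition `z ↦ z' = (a b) z`. CLC gives
`v b z' ≤ v a z`, `v z a ≤ v z' b` and `t b z' ≤ t a z`; together with Zermelo's equations this
places `D = ∑_z t b z' · (p a z - p b z')` between `0` and `R a - R b`. Every term of `D` has the
sign of `φ a - φ b`, and irreducibility makes one of the weights `t b z'` positive. Hence
`φ b ≤ φ a`, and `φ b < φ a` forces `R b < R a`.
-/

open Finset Real

section

variable {S : Type*}

lemma exists_pos_of_iScore_pos {v : S → S → ℝ} {a b : S} (hab : a ≠ b)
    (h : 0 < iScore v a b) : ∃ z ≠ a, 0 < v a z := by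
  by_contra! hrow
  have hpath : ∀ l, chainMin v a l b ≤ 0 := by
    intro l
    induction l with
    | nil => exact hrow b hab.symm
    | cons z l ih =>
      by_cases hz : z = a
      · subst hz
        exact (min_le_right _ _).trans ih
      · exact (min_le_left _ _).trans (hrow z hz)
  exact h.not_ge (Real.sSup_le (by rintro _ ⟨l, rfl⟩; exact hpath l) le_rfl)

lemma rel_of_lt_of_forall_covBy [Preorder S] [LocallyFiniteOrder S] {r : S → S → Prop}
    [IsTrans S r] (hr : ∀ a b, a ⋖ b → r a b) {x y : S} (hxy : x < y) : r x y := by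
  have := Relation.TransGen.mono hr x y (transGen_covBy_of_lt hxy)
  rwa [Relation.transGen_eq_self] at this

/-- The Bradley–Terry probability that `x` beats `y`. -/
noncomputable def btProb (φ : S → ℝ) (x y : S) : ℝ := φ x / (φ x + φ y)

lemma btProb_nonneg {φ : S → ℝ} (hφ : ∀ x, 0 < φ x) (x y : S) : 0 ≤ btProb φ x y :=
  div_nonneg (hφ x).le (add_pos (hφ x) (hφ y)).le

lemma btProb_le_one {φ : S → ℝ} (hφ : ∀ x, 0 < φ x) (x y : S) : btProb φ x y ≤ 1 :=
  div_le_one_of_le₀ (le_add_of_nonneg_right (hφ y).le) (add_pos (hφ x) (hφ y)).le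

lemma mul_btProb_sub_btProb_swap_pos [DecidableEq S] {φ : S → ℝ} (hφ : ∀ x, 0 < φ x)
    {a b z : S} (hz : z ≠ a) (h : φ a ≠ φ b) :
    0 < (φ a - φ b) * (btProb φ a z - btProb φ b (Equiv.swap a b z)) := by
  have hsq : 0 < (φ a - φ b) * (φ a - φ b) := mul_self_pos.2 (sub_ne_zero.2 h)
  by_cases hzb : z = b
  · subst hzb
    have hdiff : btProb φ a z - btProb φ z a = (φ a - φ z) / (φ a + φ z) := by
      rw [btProb, btProb, add_comm (φ z), div_sub_div_same]
    rw [Equiv.swap_apply_right, hdiff, ← mul_div_assoc]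
    exact div_pos hsq (add_pos (hφ a) (hφ z))
  · have hdiff : btProb φ a z - btProb φ b z =
        (φ a - φ b) * φ z / ((φ a + φ z) * (φ b + φ z)) := by
      have haz := (add_pos (hφ a) (hφ z)).ne'
      have hbz := (add_pos (hφ b) (hφ z)).ne'
      unfold btProb
      field_simp
      ring
    rw [Equiv.swap_apply_of_ne_of_ne hz hzb, hdiff, ← mul_div_assoc, ← mul_assoc]
    exact div_pos (mul_pos hsq (hφ z)) (mul_pos (add_pos (hφ a) (hφ z)) (add_pos (hφ b) (hφ z)))

section Sums

variable [Fintype S] [DecidableEq S] {M : Type*}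

lemma sum_erase_eq_sum_erase_swap [AddCommGroup M] (f : S → M) (a b : S) :
    ∑ z ∈ univ.erase b, f z = ∑ z ∈ univ.erase a, f (Equiv.swap a b z) := by
  rw [sum_erase_eq_sub (mem_univ b), sum_erase_eq_sub (mem_univ a),
    Equiv.sum_comp (Equiv.swap a b) f, Equiv.swap_apply_left]

lemma sum_sum_erase_eq_of_eq_zero [AddCommMonoid M] (F : S → S → M) (a : S)
    (hF : ∀ x y, x ≠ y → x ≠ a → y ≠ a → F x y = 0) :
    ∑ x, ∑ y ∈ univ.erase x, F x y = ∑ y ∈ univ.erase a, (F a y + F y a) := by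
  rw [← add_sum_erase _ _ (mem_univ a), sum_add_distrib]
  congr 1
  refine sum_congr rfl fun x hx => sum_eq_single_of_mem a ?_ fun y hy hya => ?_
  · exact mem_erase.2 ⟨(ne_of_mem_erase hx).symm, mem_univ a⟩
  · exact hF x y (ne_of_mem_erase hy).symm (ne_of_mem_erase hx) hya

end Sums

section Likelihood

variable [Fintype S] [DecidableEq S]

noncomputable def logLik (v : S → S → ℝ) (ψ : S → ℝ) : ℝ :=
  ∑ x, ∑ y ∈ univ.erase x, v x y * (log (ψ x) - log (ψ x + ψ y))

variable {v : S → S → ℝ} {φ ψ : S → ℝ}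

lemma Zf_eq_exp_logLik (hψ : ∀ x, 0 < ψ x) : Zf v ψ = exp (logLik v ψ) := by
  simp only [Zf, logLik, exp_sum]
  refine prod_congr rfl fun x _ => prod_congr rfl fun y _ => ?_
  rw [rpow_def_of_pos (hψ x), rpow_def_of_pos (add_pos (hψ x) (hψ y)), ← exp_sub]
  ring_nf

lemma logLik_smul {c : ℝ} (hc : 0 < c) (hψ : ∀ x, 0 < ψ x) :
    logLik v (c • ψ) = logLik v ψ := by
  refine sum_congr rfl fun x _ => sum_congr rfl fun y _ => ?_
  have hx := (hψ x).ne'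
  have hxy := (add_pos (hψ x) (hψ y)).ne'
  simp only [Pi.smul_apply, smul_eq_mul, ← mul_add, log_mul hc.ne' hx, log_mul hc.ne' hxy]
  ring

lemma logLik_le_of_forall_Zf_le (hφ : φ ∈ simplexPos S)
    (hmax : ∀ ψ ∈ simplexPos S, Zf v ψ ≤ Zf v φ) (hψ : ∀ x, 0 < ψ x) :
    logLik v ψ ≤ logLik v φ := by
  have hne : (univ : Finset S).Nonempty :=
    nonempty_of_sum_ne_zero (hφ.2.symm ▸ one_ne_zero)
  have hsum : 0 < ∑ x, ψ x := sum_pos (fun x _ => hψ x) hne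
  have hscaled : (∑ x, ψ x)⁻¹ • ψ ∈ simplexPos S :=
    ⟨fun x => mul_pos (inv_pos.2 hsum) (hψ x), by
      simp only [Pi.smul_apply, smul_eq_mul, ← mul_sum, inv_mul_cancel₀ hsum.ne']⟩
  have hle := hmax _ hscaled
  rw [Zf_eq_exp_logLik hscaled.1, Zf_eq_exp_logLik hφ.1, exp_le_exp,
    logLik_smul (inv_pos.2 hsum) hψ] at hle
  exact hle

def rowSum (v : S → S → ℝ) (x : S) : ℝ := ∑ z ∈ univ.erase x, v x z

/-- Zermelo's equations: the derivative of the log-likelihood vanishes at `φ` in the direction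
that scales `φ a`. -/
lemma rowSum_eq_sum_btProb (hφ : ∀ x, 0 < φ x)
    (hmax : ∀ ψ : S → ℝ, (∀ x, 0 < ψ x) → logLik v ψ ≤ logLik v φ) (a : S) :
    rowSum v a = ∑ z ∈ univ.erase a, (v a z + v z a) * btProb φ a z := by
  set d : S → ℝ := Pi.single a (φ a)
  have hd : ∀ x, x ≠ a → d x = 0 := fun x hx => Pi.single_eq_of_ne hx _
  have hpert : ∀ ε ∈ Set.Ioi (-1 : ℝ), ∀ x, 0 < φ x + ε * d x := by
    intro ε hε x
    by_cases hx : x = a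
    · subst hx
      have : 0 < φ x * (1 + ε) := mul_pos (hφ x) (by linarith [Set.mem_Ioi.1 hε])
      simpa [d, mul_add, mul_comm] using this
    · simpa [hd x hx] using hφ x
  have hlocal : IsLocalMax (fun ε => logLik v fun x => φ x + ε * d x) 0 := by
    filter_upwards [Ioi_mem_nhds (neg_one_lt_zero : (-1 : ℝ) < 0)] with ε hε
    simpa using hmax _ (hpert ε hε)
  have hderiv : HasDerivAt (fun ε => logLik v fun x => φ x + ε * d x)
      (∑ x, ∑ y ∈ univ.erase x, v x y * (d x / φ x - (d x + d y) / (φ x + φ y))) 0 := by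
    refine HasDerivAt.fun_sum fun x _ => HasDerivAt.fun_sum fun y _ => ?_
    have hline : ∀ z, HasDerivAt (fun ε : ℝ => φ z + ε * d z) (d z) 0 := fun z => by
      simpa using ((hasDerivAt_id (0 : ℝ)).mul_const (d z)).const_add (φ z)
    have hx := (hline x).log (by simpa using (hφ x).ne')
    have hxy := ((hline x).add (hline y)).log (by simpa using (add_pos (hφ x) (hφ y)).ne')
    simpa using (hx.sub hxy).const_mul (v x y)
  rw [sum_sum_erase_eq_of_eq_zero _ a fun x y _ hx hy => by simp [hd x hx, hd y hy]]
    at hderiv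
  have hzero := hlocal.hasDerivAt_eq_zero hderiv
  rw [rowSum, ← sub_eq_zero, ← sum_sub_distrib, ← hzero]
  refine sum_congr rfl fun z hz => ?_
  have hza := ne_of_mem_erase hz
  have ha := (hφ a).ne'
  have haz := (add_pos (hφ a) (hφ z)).ne'
  simp only [btProb, d, Pi.single_eq_same, Pi.single_eq_of_ne hza, add_comm (φ z) (φ a)]
  field_simp
  ring

end Likelihood

section Swap

variable [Fintype S] [DecidableEq S] {v : S → S → ℝ} {φ : S → ℝ} {a b : S}

lemma rowSum_sub_rowSum :
    rowSum v a - rowSum v b = ∑ z ∈ univ.erase a, (v a z - v b (Equiv.swap a b z)) := by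
  rw [rowSum, rowSum, sum_erase_eq_sum_erase_swap _ a b, sum_sub_distrib]

lemma rowSum_sub_rowSum_of_zermelo
    (hzermelo : ∀ x, rowSum v x = ∑ z ∈ univ.erase x, (v x z + v z x) * btProb φ x z) :
    rowSum v a - rowSum v b = ∑ z ∈ univ.erase a, ((v a z + v z a) * btProb φ a z -
      (v b (Equiv.swap a b z) + v (Equiv.swap a b z) b) * btProb φ b (Equiv.swap a b z)) := by
  rw [hzermelo a, hzermelo b, sum_erase_eq_sum_erase_swap _ a b, sum_sub_distrib]

noncomputable def swapGap (v : S → S → ℝ) (φ : S → ℝ) (a b : S) : ℝ :=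
  ∑ z ∈ univ.erase a, (v b (Equiv.swap a b z) + v (Equiv.swap a b z) b) *
    (btProb φ a z - btProb φ b (Equiv.swap a b z))

lemma mul_swapGap_pos (hv : IsLlull v) (hφ : ∀ x, 0 < φ x) (hb : ∃ z ≠ b, 0 < v b z)
    (h : φ a ≠ φ b) : 0 < (φ a - φ b) * swapGap v φ a b := by
  have hweight : ∀ z ∈ univ.erase a,
      0 ≤ v b (Equiv.swap a b z) + v (Equiv.swap a b z) b := fun z hz => by
    have hzb : Equiv.swap a b z ≠ b := by
      simpa [Equiv.swap_apply_eq_iff] using ne_of_mem_erase hz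
    exact add_nonneg (hv _ _ hzb.symm).1 (hv _ _ hzb).1
  have hsign : ∀ z ∈ univ.erase a,
      0 < (φ a - φ b) * (btProb φ a z - btProb φ b (Equiv.swap a b z)) := fun z hz =>
    mul_btProb_sub_btProb_swap_pos hφ (ne_of_mem_erase hz) h
  obtain ⟨c, hcb, hc⟩ := hb
  have hmem : Equiv.swap a b c ∈ univ.erase a := by
    simpa [Equiv.swap_apply_eq_iff] using hcb
  rw [swapGap, mul_sum]
  refine sum_pos' (fun z hz => ?_) ⟨_, hmem, ?_⟩
  · rw [mul_left_comm]
    exact mul_nonneg (hweight z hz) (hsign z hz).le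
  · rw [mul_left_comm]
    refine mul_pos ?_ (hsign _ hmem)
    rw [Equiv.swap_apply_self]
    linarith [(hv c b hcb).1]

end Swap

section Cover

variable [LinearOrder S] {v : S → S → ℝ} {a b z : S}

lemma lt_or_lt_of_covBy (hab : a ⋖ b) (hza : z ≠ a) (hzb : z ≠ b) : z < a ∨ b < z := by
  rcases hza.lt_or_gt with h | h
  · exact Or.inl h
  · exact Or.inr ((hab.ge_of_gt h).lt_of_ne' hzb)

lemma CLC.row_le_of_covBy (hclc : CLC v) (hab : a ⋖ b) (hza : z ≠ a) (hzb : z ≠ b) :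
    v b z ≤ v a z := by
  rcases lt_or_lt_of_covBy hab hza hzb with h | h
  · rw [hclc.2.2.1 z a b h hab.lt]
    exact min_le_right _ _
  · rw [hclc.2.1 a b z hab.lt h]
    exact le_max_right _ _

lemma CLC.col_le_of_covBy (hclc : CLC v) (hab : a ⋖ b) (hza : z ≠ a) (hzb : z ≠ b) :
    v z a ≤ v z b := by
  rcases lt_or_lt_of_covBy hab hza hzb with h | h
  · rw [hclc.2.1 z a b h hab.lt]
    exact le_max_left _ _
  · rw [hclc.2.2.1 a b z hab.lt h]
    exact min_le_left _ _

variable [DecidableEq S]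

lemma CLC.swap_le_of_covBy (hclc : CLC v) (hab : a ⋖ b) (hza : z ≠ a) :
    v b (Equiv.swap a b z) ≤ v a z ∧ v z a ≤ v (Equiv.swap a b z) b ∧
      v b (Equiv.swap a b z) + v (Equiv.swap a b z) b ≤ v a z + v z a := by
  by_cases hzb : z = b
  · subst hzb
    have hba := hclc.1 a z hab.lt
    rw [Equiv.swap_apply_right]
    exact ⟨hba, hba, (add_comm _ _).le⟩
  · rw [Equiv.swap_apply_of_ne_of_ne hza hzb]
    exact ⟨hclc.row_le_of_covBy hab hza hzb, hclc.col_le_of_covBy hab hza hzb,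
      by linarith [(hclc.2.2.2 a b z hab hza hzb).1]⟩

variable [Fintype S]

lemma CLC.rowSum_le_of_covBy (hclc : CLC v) (hab : a ⋖ b) : rowSum v b ≤ rowSum v a := by
  rw [← sub_nonneg, rowSum_sub_rowSum]
  exact sum_nonneg fun z hz => sub_nonneg.2 (hclc.swap_le_of_covBy hab (ne_of_mem_erase hz)).1

variable {φ : S → ℝ} (hφ : ∀ x, 0 < φ x)
  (hzermelo : ∀ x, rowSum v x = ∑ z ∈ univ.erase x, (v x z + v z x) * btProb φ x z)
include hφ hzermelo

lemma CLC.swapGap_nonneg (hclc : CLC v) (hab : a ⋖ b) : 0 ≤ swapGap v φ a b := by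
  have hterm : ∀ z ∈ univ.erase a,
      (v a z + v z a) * btProb φ a z -
        (v b (Equiv.swap a b z) + v (Equiv.swap a b z) b) * btProb φ b (Equiv.swap a b z) ≤
      (v a z - v b (Equiv.swap a b z)) +
        (v b (Equiv.swap a b z) + v (Equiv.swap a b z) b) *
          (btProb φ a z - btProb φ b (Equiv.swap a b z)) := fun z hz => by
    obtain ⟨-, hcol, htot⟩ := hclc.swap_le_of_covBy hab (ne_of_mem_erase hz)
    have := mul_le_of_le_one_right (sub_nonneg.2 htot) (btProb_le_one hφ a z)
    linarith
  have hsum := sum_le_sum hterm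
  rw [← rowSum_sub_rowSum_of_zermelo hzermelo, sum_add_distrib, ← rowSum_sub_rowSum,
    ← swapGap] at hsum
  linarith

lemma CLC.swapGap_le_rowSum_sub (hclc : CLC v) (hab : a ⋖ b) :
    swapGap v φ a b ≤ rowSum v a - rowSum v b := by
  rw [rowSum_sub_rowSum_of_zermelo hzermelo]
  refine sum_le_sum fun z hz => ?_
  have htot := (hclc.swap_le_of_covBy hab (ne_of_mem_erase hz)).2.2
  have := mul_le_mul_of_nonneg_right htot (btProb_nonneg hφ a z)
  linarith

variable (hv : IsLlull v) (hb : ∃ z ≠ b, 0 < v b z)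
include hv hb

lemma CLC.strength_le_of_covBy (hclc : CLC v) (hab : a ⋖ b) : φ b ≤ φ a := by
  by_contra! h
  have hprod := mul_swapGap_pos hv hφ hb h.ne
  nlinarith [hclc.swapGap_nonneg hφ hzermelo hab]

lemma CLC.rowSum_lt_of_covBy (hclc : CLC v) (hab : a ⋖ b) (h : φ b < φ a) :
    rowSum v b < rowSum v a := by
  have hgap := pos_of_mul_pos_right (mul_swapGap_pos hv hφ hb h.ne') (sub_nonneg.2 h.le)
  linarith [hclc.swapGap_le_rowSum_sub hφ hzermelo hab]

end Cover

/-- The three hypotheses together define a transitive relation, which therefore extends from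
covers to `<`. -/
lemma lt_of_lt_of_forall_covBy {α β : Type*} [LinearOrder S] [LocallyFiniteOrder S]
    [LinearOrder α] [Preorder β] {f : S → α} {g : S → β} (hf : ∀ a b, a ⋖ b → f b ≤ f a)
    (hg : ∀ a b, a ⋖ b → g b ≤ g a) (hfg : ∀ a b, a ⋖ b → f b < f a → g b < g a)
    {x y : S} (h : f y < f x) : g y < g x := by
  let r : S → S → Prop := fun x y => f y ≤ f x ∧ g y ≤ g x ∧ (f y < f x → g y < g x)
  have : IsTrans S r := ⟨fun x y z ⟨hfxy, hgxy, hxy⟩ ⟨hfyz, hgyz, hyz⟩ =>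
    ⟨hfyz.trans hfxy, hgyz.trans hgxy, fun hzx => (lt_or_ge (f z) (f y)).elim
      (fun hzy => (hyz hzy).trans_le hgxy) (fun hyz' => hgyz.trans_lt (hxy (hyz'.trans_lt hzx)))⟩⟩
  have hr : ∀ x y, x < y → r x y := fun x y =>
    rel_of_lt_of_forall_covBy fun a b hab => ⟨hf a b hab, hg a b hab, hfg a b hab⟩
  rcases lt_trichotomy x y with hxy | rfl | hyx
  · exact (hr x y hxy).2.2 h
  · exact absurd h (lt_irrefl _)
  · exact absurd (hr y x hyx).1 h.not_ge

end

theorem stmt19_general {S : Type*} [LinearOrder S] [Fintype S] [DecidableEq S]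
    (v : S → S → ℝ) (hv : IsLlull v) (hclc : CLC v)
    (hirr : ∀ x y : S, x ≠ y → 0 < iScore v x y)
    (φ : S → ℝ) (hφ : φ ∈ simplexPos S)
    (hmax : ∀ ψ ∈ simplexPos S, Zf v ψ ≤ Zf v φ)
    (x y : S) (h : φ y < φ x) : mps v y < mps v x := by
  let := Fintype.toLocallyFiniteOrder (α := S)
  have hzermelo := rowSum_eq_sum_btProb hφ.1 fun ψ hψ => logLik_le_of_forall_Zf_le hφ hmax hψ
  have hb : ∀ a b : S, a ⋖ b → ∃ z ≠ b, 0 < v b z := fun a b hab =>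
    exists_pos_of_iScore_pos hab.ne' (hirr b a hab.ne')
  have hrow : rowSum v y < rowSum v x := lt_of_lt_of_forall_covBy
    (fun a b hab => hclc.strength_le_of_covBy hφ.1 hzermelo hv (hb a b hab) hab)
    (fun a b hab => hclc.rowSum_le_of_covBy hab)
    (fun a b hab => hclc.rowSum_lt_of_covBy hφ.1 hzermelo hv (hb a b hab) hab) h
  have hcard : (1 : ℝ) < Fintype.card S := by
    exact_mod_cast Fintype.one_lt_card_iff.2 ⟨x, y, fun hxy => h.ne (hxy ▸ rfl)⟩
  exact mul_lt_mul_of_pos_left hrow (inv_pos.2 (sub_pos.2 hcard))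

/-- For an irreducible Llull matrix with CLC structure, the Zermelo strengths
(the maximizer of `F` on the open simplex) satisfy: `φ x > φ y ⟹ ρ x > ρ y`. -/
theorem stmt19 {S : Type*} [LinearOrder S] [Fintype S] [DecidableEq S]
    (hS : 2 ≤ Fintype.card S)
    (v : S → S → ℝ) (hv : IsLlull v) (hclc : CLC v)
    (hirr : ∀ x y : S, x ≠ y → 0 < iScore v x y)
    (φ : S → ℝ) (hφ : φ ∈ simplexPos S)
    (hmax : ∀ ψ ∈ simplexPos S, Zf v ψ ≤ Zf v φ)
    (x y : S) (h : φ y < φ x) : mps v y < mps v x :=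
  stmt19_general v hv hclc hirr φ hφ hmax x y h
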